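/- Formal diagonalization (algebraic core of the quantum diagonalization theorem): Let R be a (possibly noncommutative) unital ring that is an algebra over a field K, ι a finite index type, q : ι → R pairwise orthogonal idempotents summing to one, and λ : ι → K injective. Let H ∈ PowerSeries R have constant coefficient equal to ∑ i, (λ i) • (q i). Then there exists a unit u of PowerSeries R with u - 1 in the ideal generated by X such that the elements P i := u * (C (q i)) * u⁻¹ (where C (q i) is the constant power series with value q i) satisfy: P i * P j = 0 for i ≠ j, P i * P i = P i, ∑ i, P i = 1, the constant coefficient of P i is q i, H * P i = P i * H for every i, and H = ∑ i, P i * H * P i. -/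

import Mathlib

open PowerSeries Polynomial

section AuxFQD

variable {R : Type*} [Ring R]

private lemma fqd_Xpow_dvd_mul_left {n : ℕ} (b : PowerSeries R) {a : PowerSeries R}
    (h : (X : PowerSeries R) ^ n ∣ a) : (X : PowerSeries R) ^ n ∣ b * a := by
  obtain ⟨c, rfl⟩ := h
  exact ⟨b * c, by rw [← mul_assoc, ((commute_X b).pow_right n).eq, mul_assoc]⟩

private lemma fqd_Xpow_dvd_mul {m k : ℕ} {a b : PowerSeries R}
    (ha : (X : PowerSeries R) ^ m ∣ a) (hb : (X : PowerSeries R) ^ k ∣ b) :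
    (X : PowerSeries R) ^ (m + k) ∣ a * b := by
  obtain ⟨c, rfl⟩ := ha
  obtain ⟨e, he⟩ := fqd_Xpow_dvd_mul_left c hb
  exact ⟨e, by rw [mul_assoc, he, ← mul_assoc, ← pow_add]⟩

private lemma fqd_coeff_eq_of_dvd {n k : ℕ} {a b : PowerSeries R}
    (h : (X : PowerSeries R) ^ n ∣ a - b) (hk : k < n) :
    PowerSeries.coeff k a = PowerSeries.coeff k b := by
  have := PowerSeries.X_pow_dvd_iff.mp h k hk
  rw [map_sub, sub_eq_zero] at this
  exact this

private lemma fqd_coeff_mul_congr {k : ℕ} {a a' b b' : PowerSeries R}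
    (ha : ∀ l ≤ k, PowerSeries.coeff l a = PowerSeries.coeff l a') (hb : ∀ l ≤ k, PowerSeries.coeff l b = PowerSeries.coeff l b') :
    PowerSeries.coeff k (a * b) = PowerSeries.coeff k (a' * b') := by
  rw [PowerSeries.coeff_mul, PowerSeries.coeff_mul]
  refine Finset.sum_congr rfl fun p hp => ?_
  rw [Finset.HasAntidiagonal.mem_antidiagonal] at hp
  rw [ha p.1 (by omega), hb p.2 (by omega)]

end AuxFQD

/-- The Newton iteration map for idempotents. -/
private noncomputable def fqdN {K : Type*} [CommRing K] (p : Polynomial K) : Polynomial K :=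
  3 * p ^ 2 - 2 * p ^ 3

private lemma fqdN_idem {K : Type*} [CommRing K] (p : Polynomial K) :
    (fqdN p) ^ 2 - fqdN p = (p ^ 2 - p) ^ 2 * (4 * (p ^ 2 - p) - 3) := by
  simp only [fqdN]; ring

private lemma fqdN_sub {K : Type*} [CommRing K] (p : Polynomial K) :
    fqdN p - p = (p ^ 2 - p) * (1 - 2 * p) := by
  simp only [fqdN]; ring

private lemma fqdN_mul {K : Type*} [CommRing K] (p r : Polynomial K) :
    fqdN p * fqdN r = (p * r) ^ 2 * ((3 - 2 * p) * (3 - 2 * r)) := by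
  simp only [fqdN]; ring

section AlgAux

variable {K R : Type*} [Field K] [Ring R] [Algebra K R]

/-- `constantCoeff` as a `K`-algebra homomorphism. -/
private noncomputable def fqdCC : PowerSeries R →ₐ[K] R :=
  { PowerSeries.constantCoeff (R := R) with
    commutes' := fun k => by
      simp [PowerSeries.algebraMap_apply] }

private lemma fqdCC_apply (a : PowerSeries R) : fqdCC (K := K) a = PowerSeries.constantCoeff a := rfl

private lemma fqd_aeval_orth {ι : Type*} [Fintype ι] (q : ι → R)
    (hq0 : ∀ i j, i ≠ j → q i * q j = 0)
    (hq1 : ∀ i, q i * q i = q i)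
    (hq2 : ∑ i, q i = 1)
    (lam : ι → K) (p : Polynomial K) :
    Polynomial.aeval (∑ i, lam i • q i) p = ∑ i, p.eval (lam i) • q i := by
  induction p using Polynomial.induction_on with
  | C a =>
      simp only [aeval_C, eval_C]
      rw [Algebra.algebraMap_eq_smul_one, ← hq2, Finset.smul_sum]
  | add p r hp hr =>
      simp [hp, hr, Finset.sum_add_distrib, add_smul]
  | monomial n a ih =>
      have hid : (Polynomial.C a : Polynomial K) * Polynomial.X ^ (n + 1) = Polynomial.C a * Polynomial.X ^ n * Polynomial.X := by
        ring
      rw [hid, map_mul, ih, Polynomial.aeval_X, Finset.sum_mul_sum]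
      rw [Finset.sum_congr rfl (fun i _ => Finset.sum_eq_single i
        (fun j _ hj => by
          rw [smul_mul_assoc, mul_smul_comm, smul_smul, hq0 i j (fun h => hj h.symm)]
          simp
          )
        (fun h => absurd (Finset.mem_univ i) h))]
      refine Finset.sum_congr rfl fun i _ => ?_
      rw [smul_mul_assoc, mul_smul_comm, smul_smul, hq1 i]
      congr 1
      simp [mul_assoc, pow_succ]

end AlgAux
/-- Formal diagonalization (quantum diagonalization theorem): the spectral projections
`q i` of the principal symbol `∑ i, lam i • q i` of `H` can be conjugated by a unit
`u ≡ 1 (mod X)` to quantum projections `P i = u * C (q i) * u⁻¹` that commute with the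
full Hamiltonian `H` and block-diagonalize it. -/
theorem formal_quantum_diagonalization
    {K R ι : Type*} [Field K] [Ring R] [Algebra K R] [Fintype ι]
    (q : ι → R)
    (hq0 : ∀ i j, i ≠ j → q i * q j = 0)
    (hq1 : ∀ i, q i * q i = q i)
    (hq2 : ∑ i, q i = 1)
    (lam : ι → K) (hinj : Function.Injective lam)
    (H : PowerSeries R)
    (hH : PowerSeries.constantCoeff H = ∑ i, lam i • q i) :
    ∃ u : (PowerSeries R)ˣ,
      (u : PowerSeries R) - 1 ∈ Ideal.span {(X : PowerSeries R)} ∧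
      (let P : ι → PowerSeries R :=
        fun i => (u : PowerSeries R) * PowerSeries.C (q i) * (↑u⁻¹ : PowerSeries R)
       (∀ i j, i ≠ j → P i * P j = 0) ∧
       (∀ i, P i * P i = P i) ∧
       (∑ i, P i = 1) ∧
       (∀ i, PowerSeries.constantCoeff (P i) = q i) ∧
       (∀ i, H * P i = P i * H) ∧
       H = ∑ i, P i * H * P i) := by
  classical
  -- Lagrange interpolation basis polynomials
  set L : ι → Polynomial K := fun i => Lagrange.basis Finset.univ lam i with hLdef
  have hLself : ∀ i, (L i).eval (lam i) = 1 := fun i =>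
    Lagrange.eval_basis_self hinj.injOn (Finset.mem_univ i)
  have hLne : ∀ i j, i ≠ j → (L i).eval (lam j) = 0 := fun i j hij =>
    Lagrange.eval_basis_of_ne hij (Finset.mem_univ j)
  have hconst : ∀ p : Polynomial K,
      PowerSeries.constantCoeff (Polynomial.aeval H p) = ∑ k, p.eval (lam k) • q k := by
    intro p
    calc PowerSeries.constantCoeff (Polynomial.aeval H p) = fqdCC (K := K) (Polynomial.aeval H p) := rfl
      _ = Polynomial.aeval (fqdCC (K := K) H) p := (Polynomial.aeval_algHom_apply _ H p).symm
      _ = Polynomial.aeval (∑ i, lam i • q i) p := by rw [fqdCC_apply, hH]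
      _ = ∑ k, p.eval (lam k) • q k := fqd_aeval_orth q hq0 hq1 hq2 lam p
  -- the Newton approximants
  have hA : ∀ i m, (X : PowerSeries R) ^ (2 ^ m) ∣
      Polynomial.aeval H ((fqdN^[m] (L i)) ^ 2 - fqdN^[m] (L i)) := by
    intro i m
    induction m with
    | zero =>
      simp only [Function.iterate_zero, id_eq, pow_zero, pow_one]
      rw [PowerSeries.X_dvd_iff, hconst]
      refine Finset.sum_eq_zero fun k _ => ?_
      rcases eq_or_ne k i with rfl | hk
      · simp [hLself k]
      · simp [hLne i k (Ne.symm hk)]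
    | succ m ih =>
      have h2 : (2 : ℕ) ^ (m + 1) = 2 ^ m + 2 ^ m := by rw [pow_succ, mul_two]
      rw [Function.iterate_succ_apply', fqdN_idem, map_mul, map_pow, sq, h2]
      exact (fqd_Xpow_dvd_mul ih ih).mul_right _
  have hB : ∀ i j, i ≠ j → ∀ m, (X : PowerSeries R) ^ (2 ^ m) ∣
      Polynomial.aeval H (fqdN^[m] (L i) * fqdN^[m] (L j)) := by
    intro i j hij m
    induction m with
    | zero =>
      simp only [Function.iterate_zero, id_eq, pow_zero, pow_one]
      rw [PowerSeries.X_dvd_iff, hconst]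
      refine Finset.sum_eq_zero fun k _ => ?_
      rcases eq_or_ne k i with rfl | hk
      · simp [hLne j k (Ne.symm hij)]
      · simp [hLne i k (Ne.symm hk)]
    | succ m ih =>
      have h2 : (2 : ℕ) ^ (m + 1) = 2 ^ m + 2 ^ m := by rw [pow_succ, mul_two]
      rw [Function.iterate_succ_apply' fqdN m (L i), Function.iterate_succ_apply' fqdN m (L j),
        fqdN_mul, map_mul, map_pow, sq, h2]
      exact (fqd_Xpow_dvd_mul ih ih).mul_right _
  have hC : ∀ i m, (X : PowerSeries R) ^ (2 ^ m) ∣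
      Polynomial.aeval H (fqdN^[m + 1] (L i) - fqdN^[m] (L i)) := by
    intro i m
    rw [Function.iterate_succ_apply', fqdN_sub, map_mul]
    exact (hA i m).mul_right _
  have mono : ∀ i k m m', m ≤ m' → k < 2 ^ m →
      PowerSeries.coeff k (Polynomial.aeval H (fqdN^[m] (L i))) =
      PowerSeries.coeff k (Polynomial.aeval H (fqdN^[m'] (L i))) := by
    intro i k m m' hmm hk
    induction m', hmm using Nat.le_induction with
    | base => rfl
    | succ m' hm ih =>
      rw [ih]
      refine (fqd_coeff_eq_of_dvd (n := 2 ^ m') ?_ ?_).symm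
      · rw [← map_sub]; exact hC i m'
      · exact lt_of_lt_of_le hk (Nat.pow_le_pow_right two_pos hm)
  set P : ι → PowerSeries R :=
    fun i => PowerSeries.mk fun k => PowerSeries.coeff k (Polynomial.aeval H (fqdN^[k + 1] (L i))) with hPdef
  have stab : ∀ i k m, k < 2 ^ m →
      PowerSeries.coeff k (P i) = PowerSeries.coeff k (Polynomial.aeval H (fqdN^[m] (L i))) := by
    intro i k m hk
    have hk1 : k < 2 ^ (k + 1) :=
      lt_of_lt_of_le (Nat.lt_two_pow_self (n := k)) (Nat.pow_le_pow_right two_pos (Nat.le_succ k))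
    rw [hPdef]
    simp only [coeff_mk]
    rcases le_total (k + 1) m with h | h
    · exact mono i k (k + 1) m h hk1
    · exact (mono i k m (k + 1) h hk).symm
  have stab' : ∀ i k m, k < 2 ^ m → ∀ l, l ≤ k →
      PowerSeries.coeff l (P i) = PowerSeries.coeff l (Polynomial.aeval H (fqdN^[m] (L i))) :=
    fun i k m hk l hl => stab i l m (lt_of_le_of_lt hl hk)
  have hkself : ∀ k : ℕ, k < 2 ^ (k + 1) := fun k =>
    lt_of_lt_of_le (Nat.lt_two_pow_self (n := k)) (Nat.pow_le_pow_right two_pos (Nat.le_succ k))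
  -- idempotency
  have hidem : ∀ i, P i * P i = P i := by
    intro i
    ext k
    have hk := hkself k
    have h1 : PowerSeries.coeff k (P i * P i) =
        PowerSeries.coeff k (Polynomial.aeval H (fqdN^[k + 1] (L i)) *
          Polynomial.aeval H (fqdN^[k + 1] (L i))) :=
      fqd_coeff_mul_congr (stab' i k (k + 1) hk) (stab' i k (k + 1) hk)
    rw [h1, stab i k (k + 1) hk]
    refine fqd_coeff_eq_of_dvd (n := 2 ^ (k + 1)) ?_ hk
    rw [← map_mul, ← map_sub, ← sq]
    exact hA i (k + 1)
  -- orthogonality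
  have horth : ∀ i j, i ≠ j → P i * P j = 0 := by
    intro i j hij
    ext k
    have hk := hkself k
    have h1 : PowerSeries.coeff k (P i * P j) =
        PowerSeries.coeff k (Polynomial.aeval H (fqdN^[k + 1] (L i)) *
          Polynomial.aeval H (fqdN^[k + 1] (L j))) :=
      fqd_coeff_mul_congr (stab' i k (k + 1) hk) (stab' j k (k + 1) hk)
    rw [map_zero, h1, ← map_mul]
    exact PowerSeries.X_pow_dvd_iff.mp (hB i j hij (k + 1)) k hk
  -- constant coefficients
  have hP0 : ∀ i, PowerSeries.constantCoeff (P i) = q i := by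
    intro i
    rw [← PowerSeries.coeff_zero_eq_constantCoeff_apply, stab i 0 0 (by norm_num)]
    simp only [Function.iterate_zero, id_eq]
    rw [PowerSeries.coeff_zero_eq_constantCoeff_apply, hconst]
    rw [Finset.sum_eq_single i
      (fun k _ hk => by rw [hLne i k (Ne.symm hk), zero_smul])
      (fun h => absurd (Finset.mem_univ i) h)]
    rw [hLself i, one_smul]
  -- commutation with H
  have haevalcomm : ∀ t : Polynomial K,
      H * Polynomial.aeval H t = Polynomial.aeval H t * H := by
    intro t
    have h1 : Polynomial.aeval H (Polynomial.X * t) =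
        Polynomial.aeval H (t * Polynomial.X) := by rw [mul_comm]
    simpa [map_mul, Polynomial.aeval_X] using h1
  have hcomm : ∀ i, H * P i = P i * H := by
    intro i
    ext k
    have hk := hkself k
    have h1 : PowerSeries.coeff k (H * P i) =
        PowerSeries.coeff k (H * Polynomial.aeval H (fqdN^[k + 1] (L i))) :=
      fqd_coeff_mul_congr (fun l _ => rfl) (stab' i k (k + 1) hk)
    have h2 : PowerSeries.coeff k (P i * H) =
        PowerSeries.coeff k (Polynomial.aeval H (fqdN^[k + 1] (L i)) * H) :=
      fqd_coeff_mul_congr (stab' i k (k + 1) hk) (fun l _ => rfl)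
    rw [h1, h2, haevalcomm]
  -- the sum is 1
  have hE2 : (∑ i, P i) * (∑ i, P i) = ∑ i, P i := by
    rw [Finset.sum_mul_sum]
    rw [Finset.sum_congr rfl (fun i _ => Finset.sum_eq_single i
      (fun j _ hj => horth i j (fun h => hj h.symm))
      (fun h => absurd (Finset.mem_univ i) h))]
    exact Finset.sum_congr rfl fun i _ => hidem i
  have hE0 : PowerSeries.constantCoeff (∑ i, P i) = 1 := by
    rw [map_sum]
    rw [Finset.sum_congr rfl fun i _ => hP0 i]
    exact hq2
  have hsum : ∑ i, P i = 1 := by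
    set F : PowerSeries R := 1 - ∑ i, P i with hFdef
    have hFi : F * F = F := by
      have h1 : F * F = 1 - (∑ i, P i) - (∑ i, P i) + (∑ i, P i) * (∑ i, P i) := by
        rw [hFdef]; noncomm_ring
      rw [h1, hE2, hFdef]; abel
    have hFX : (X : PowerSeries R) ∣ F := by
      rw [PowerSeries.X_dvd_iff, hFdef, map_sub, map_one, hE0, sub_self]
    obtain ⟨c, hc⟩ := hFX
    have hFpow : ∀ n : ℕ, F ^ (n + 1) = F := by
      intro n
      induction n with
      | zero => rw [pow_one]
      | succ n ih => rw [pow_succ, ih, hFi]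
    have hF0 : F = 0 := by
      ext k
      rw [map_zero]
      have hdvd : (X : PowerSeries R) ^ (k + 1) ∣ F := by
        rw [← hFpow k, hc, ((commute_X c).symm.mul_pow (k + 1))]
        exact dvd_mul_right _ _
      exact PowerSeries.X_pow_dvd_iff.mp hdvd k (Nat.lt_succ_self k)
    have := sub_eq_zero.mp (hFdef ▸ hF0)
    exact this.symm
  -- the unit
  set u0 : PowerSeries R := ∑ i, P i * PowerSeries.C (q i) with hu0
  have hu0c : PowerSeries.constantCoeff u0 = 1 := by
    rw [hu0, map_sum]
    rw [Finset.sum_congr rfl (fun i _ => by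
      rw [map_mul, hP0 i, PowerSeries.constantCoeff_C, hq1 i])]
    exact hq2
  have hu0unit : IsUnit u0 :=
    PowerSeries.isUnit_iff_constantCoeff.mpr (by rw [hu0c]; exact isUnit_one)
  have h1 : (↑hu0unit.unit : PowerSeries R) = u0 := hu0unit.unit_spec
  have key : ∀ i, u0 * PowerSeries.C (q i) = P i * u0 := by
    intro i
    have lhs : u0 * PowerSeries.C (q i) = P i * PowerSeries.C (q i) := by
      rw [hu0, Finset.sum_mul]
      rw [Finset.sum_congr rfl (fun j _ => by rw [mul_assoc, ← map_mul])]
      rw [Finset.sum_eq_single i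
        (fun j _ hj => by rw [hq0 j i hj, map_zero, mul_zero])
        (fun h => absurd (Finset.mem_univ i) h)]
      rw [hq1 i]
    have rhs : P i * u0 = P i * PowerSeries.C (q i) := by
      rw [hu0, Finset.mul_sum]
      rw [Finset.sum_eq_single i
        (fun j _ hj => by rw [← mul_assoc, horth i j (fun h => hj h.symm), zero_mul])
        (fun h => absurd (Finset.mem_univ i) h)]
      rw [← mul_assoc, hidem i]
    rw [lhs, rhs]
  refine ⟨hu0unit.unit, ?_, ?_⟩
  · rw [h1]
    have hXd : (X : PowerSeries R) ∣ u0 - 1 := by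
      rw [PowerSeries.X_dvd_iff, map_sub, hu0c, map_one, sub_self]
    obtain ⟨c, hc⟩ := hXd
    rw [Ideal.span, Submodule.mem_span_singleton]
    exact ⟨c, by rw [smul_eq_mul, (commute_X c).eq, ← hc]⟩
  · intro P'
    have hP' : ∀ i, P' i = P i := by
      intro i
      show (↑hu0unit.unit : PowerSeries R) * PowerSeries.C (q i) * ↑hu0unit.unit⁻¹ = P i
      calc (↑hu0unit.unit : PowerSeries R) * PowerSeries.C (q i) * ↑hu0unit.unit⁻¹
          = P i * ↑hu0unit.unit * ↑hu0unit.unit⁻¹ := by rw [h1, key i]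
        _ = P i := by rw [mul_assoc, Units.mul_inv, mul_one]
    refine ⟨?_, ?_, ?_, ?_, ?_, ?_⟩
    · intro i j hij; rw [hP' i, hP' j]; exact horth i j hij
    · intro i; rw [hP' i]; exact hidem i
    · rw [Finset.sum_congr rfl fun i _ => hP' i]; exact hsum
    · intro i; rw [hP' i]; exact hP0 i
    · intro i; rw [hP' i]; exact hcomm i
    · rw [Finset.sum_congr rfl fun i _ => by rw [hP' i]]
      have hterm : ∀ i, P i * H * P i = P i * H := fun i => by
        rw [mul_assoc, hcomm i, ← mul_assoc, hidem i]
      rw [Finset.sum_congr rfl fun i _ => hterm i, ← Finset.sum_mul, hsum, one_mul]
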